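/- arXiv:1912.12812 — 2 statements merged into one kernel-verified Lean document; each statement's English description precedes it below -/
import Mathlib

section
/- Suppose σ is invertible. Let δ_R(a) = 1⊗τ(a) − σ(a)⊗1 in A⊗A, and for a (σ,τ)-derivation D : A → M let f_R be the map x⊗y ↦ −D(σ⁻¹(x))·y on the sub-bimodule generated by the elements δ_R(a). Then D = f_R ∘ δ_R. -/
open TensorProduct MulOpposite

section TwistedDerivation

variable {R A M : Type*} [CommRing R] [CommRing A] [Algebra R A]
  [AddCommGroup M] [Module R M] [Module Aᵐᵒᵖ M]

variable (R) in
def liftSMulRight [IsScalarTower R Aᵐᵒᵖ M] (g : A →ₗ[R] M) : A ⊗[R] A →ₗ[R] M :=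
  lift (((Algebra.lsmul R R M).toLinearMap ∘ₗ (opLinearEquiv R).toLinearMap).compl₂ g).flip

@[simp]
theorem liftSMulRight_tmul [IsScalarTower R Aᵐᵒᵖ M] (g : A →ₗ[R] M) (x y : A) :
    liftSMulRight R g (x ⊗ₜ y) = op y • g x :=
  rfl

variable [Module A M]

theorem map_one_eq_zero_of_twisted_leibniz (σ τ : A →ₐ[R] A) (D : A →ₗ[R] M)
    (hD : ∀ a b : A, D (a * b) = op (τ b) • D a + σ a • D b) : D 1 = 0 := by
  simpa using hD 1 1

theorem neg_liftSMulRight_comp_symm_one_tmul_sub_tmul_one [IsScalarTower R Aᵐᵒᵖ M]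
    (σ : A ≃ₐ[R] A) (τ : A →ₐ[R] A) (D : A →ₗ[R] M)
    (hD : ∀ a b : A, D (a * b) = op (τ b) • D a + σ a • D b) (a : A) :
    -liftSMulRight R (D ∘ₗ σ.symm.toLinearMap) (1 ⊗ₜ τ a - σ a ⊗ₜ 1) = D a := by
  -- the term coming from `1 ⊗ τ a` is `-(op (τ a) • D (σ⁻¹ 1))`, which vanishes as `σ⁻¹ 1 = 1`
  simp [map_one_eq_zero_of_twisted_leibniz (σ : A →ₐ[R] A) τ D hD]

end TwistedDerivation

theorem universal_property_sigma_invertible_general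
    (R : Type*) [CommRing R] (A : Type*) [CommRing A] [Algebra R A]
    (M : Type*) [AddCommGroup M] [Module R M]
    [Module A M] [Module Aᵐᵒᵖ M]
    [IsScalarTower R Aᵐᵒᵖ M]
    (σ τ : A →ₐ[R] A) (σinv : A → A)
    (hinv₁ : Function.LeftInverse σinv ⇑σ)
    (hinv₂ : Function.RightInverse σinv ⇑σ)
    (D : A →ₗ[R] M)
    (hD : ∀ a b : A, D (a * b) = op (τ b) • D a + σ a • D b) :
    ∃ fR : A ⊗[R] A →ₗ[R] M,
      (∀ x y : A, fR (x ⊗ₜ[R] y) = -(op y • D (σinv x))) ∧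
      (∀ a : A, fR (1 ⊗ₜ[R] τ a - σ a ⊗ₜ[R] 1) = D a) := by
  let σEquiv : A ≃ₐ[R] A := { σ with invFun := σinv, left_inv := hinv₁, right_inv := hinv₂ }
  exact ⟨-liftSMulRight R (D ∘ₗ σEquiv.symm.toLinearMap), fun _ _ => rfl,
    neg_liftSMulRight_comp_symm_one_tmul_sub_tmul_one σEquiv τ D hD⟩

/-- Suppose `σ` is invertible, with inverse `σinv`.  For a `(σ,τ)`-derivation
`D : A → M` there is a right `A`-linear map `f_R` on `A ⊗[R] A`,
`x ⊗ y ↦ −D (σ⁻¹ x) • y`, whose restriction to the sub-bimodule generated by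
the elements `δ_R a = 1 ⊗ τ a − σ a ⊗ 1` satisfies `D = f_R ∘ δ_R`. -/
theorem universal_property_sigma_invertible
    (R : Type*) [CommRing R] (A : Type*) [CommRing A] [Algebra R A]
    (M : Type*) [AddCommGroup M] [Module R M]
    [Module A M] [Module Aᵐᵒᵖ M] [SMulCommClass A Aᵐᵒᵖ M]
    [IsScalarTower R A M] [IsScalarTower R Aᵐᵒᵖ M]
    (σ τ : A →ₐ[R] A) (σinv : A → A)
    (hinv₁ : Function.LeftInverse σinv ⇑σ)
    (hinv₂ : Function.RightInverse σinv ⇑σ)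
    (D : A →ₗ[R] M)
    (hD : ∀ a b : A, D (a * b) = op (τ b) • D a + σ a • D b) :
    ∃ fR : A ⊗[R] A →ₗ[R] M,
      (∀ x y : A, fR (x ⊗ₜ[R] y) = -(op y • D (σinv x))) ∧
      (∀ a : A, fR (1 ⊗ₜ[R] τ a - σ a ⊗ₜ[R] 1) = D a) :=
  universal_property_sigma_invertible_general R A M σ τ σinv hinv₁ hinv₂ D hD
end

section
/- Let d ≢ 1 mod 4 be square-free, σ the conjugation a + b√d ↦ a − b√d and τ = id on ℤ[√d]. Then every ℤ-linear map D : ℤ[√d] → ℤ[√d] with D(1) = 0 is a (σ,τ)-derivation. -/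
/-!
Since `1, √d` is a `ℤ`-basis of `ℤ√d` and `D 1 = 0`, we have `D z = im z • D √d`. The derivation
rule then reduces to the identity `im x * y + im y * x̄ = im (x * y)`, which holds for every `d`.
-/

open Zsqrtd

namespace Zsqrtd

variable {d : ℤ}

theorem re_smul_one_add_im_smul_sqrtd (z : ℤ√d) : z.re • (1 : ℤ√d) + z.im • sqrtd = z := by
  ext <;> simp

theorem linearMap_apply_eq_im_smul {M : Type*} [AddCommGroup M] (D : ℤ√d →ₗ[ℤ] M)
    (h1 : D 1 = 0) (z : ℤ√d) : D z = z.im • D sqrtd := by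
  conv_lhs => rw [← re_smul_one_add_im_smul_sqrtd z]
  rw [map_add, map_zsmul, map_zsmul, h1, smul_zero, zero_add]

theorem im_mul_add_im_mul_star (x y : ℤ√d) :
    (x.im : ℤ√d) * y + (y.im : ℤ√d) * star x = ((x * y).im : ℤ√d) := by
  ext <;> simp [im_mul] <;> ring

end Zsqrtd

theorem zsqrtd_linear_map_is_derivation'_general
    (d : ℤ)
    (D : ℤ√d →ₗ[ℤ] ℤ√d) (h1 : D 1 = 0) :
    ∀ x y : ℤ√d, D (x * y) = D x * y + star x * D y := by
  intro x y
  rw [linearMap_apply_eq_im_smul D h1 (x * y), linearMap_apply_eq_im_smul D h1 x,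
    linearMap_apply_eq_im_smul D h1 y]
  simp only [zsmul_eq_mul, ← im_mul_add_im_mul_star]
  ring

/-- For square-free `d ≢ 1 (mod 4)`, with `σ` the conjugation (`star`) and
`τ = id` on `ℤ√d`, every `ℤ`-linear map `D : ℤ√d → ℤ√d` with `D 1 = 0` is a
`(σ,τ)`-derivation. -/
theorem zsqrtd_linear_map_is_derivation' 
    (d : ℤ) (hsf : Squarefree d) (hd : d % 4 ≠ 1)
    (D : ℤ√d →ₗ[ℤ] ℤ√d) (h1 : D 1 = 0) :
    ∀ x y : ℤ√d, D (x * y) = D x * y + star x * D y :=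
  zsqrtd_linear_map_is_derivation'_general d D h1
end
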